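/- arXiv:1911.11229 — 2 statements merged into one kernel-verified Lean document; each statement's English description precedes it below -/
import Mathlib

section
/- Let V be a finite type, A : V → V → Prop the adjacency relation of a directed graph, and s, t ∈ V distinct vertices such that ¬A(s,t) and there is no w with A(s,w) ∧ A(w,t). Then the minimum cardinality of a set X ⊆ V \ {s,t} such that t is not reachable from s via A'(u,v) := A(u,v) ∧ ¬(u ∈ X ∧ v ∈ X) equals the minimum cardinality of an st-vertex cut of the square digraph G², i.e., of a set Y ⊆ V \ {s,t} such that t is not reachable from s via B(u,v) := A²(u,v) ∧ u ∉ Y ∧ v ∉ Y, where A²(u,v) := A(u,v) ∨ ∃ w, A(u,w) ∧ A(w,v). (Both minima are over nonempty families: under the hypothesis, X = Y = V \ {s,t} is feasible for both.) -/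
/-!
A downgrading set `X` avoiding `s` and `t` is a zero-cost cut exactly when it is an `st`-vertex
cut of `G²`, so the two minima are taken over the same family. Indeed, a walk of `G` that uses
no arc inside `X` never visits two vertices of `X` in a row, so each visit to `X` can be
bypassed by an arc of `G²` between vertices outside `X`; conversely an arc of `G²` between
vertices outside `X` is a walk of length at most two in `G` whose arcs each leave or enter a
vertex outside `X`.
-/

namespace Relation

variable {V : Type*}

def deleteInducedArcs (A : V → V → Prop) (X : Set V) (u v : V) : Prop :=
  A u v ∧ ¬ (u ∈ X ∧ v ∈ X)

def deleteVertices (R : V → V → Prop) (Y : Set V) (u v : V) : Prop :=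
  R u v ∧ u ∉ Y ∧ v ∉ Y

def square (A : V → V → Prop) (u v : V) : Prop :=
  A u v ∨ ∃ w, A u w ∧ A w v

variable {A : V → V → Prop} {X : Set V} {u v : V}

theorem ReflTransGen.deleteInducedArcs_of_deleteVertices_square
    (h : ReflTransGen (deleteVertices (square A) X) u v) :
    ReflTransGen (deleteInducedArcs A X) u v := by
  induction h with
  | refl => exact .refl
  | tail _ hstep ih =>
    obtain ⟨hadj, hb, hc⟩ := hstep
    rcases hadj with hbc | ⟨w, hbw, hwc⟩
    · exact ih.tail ⟨hbc, fun h => hb h.1⟩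
    · exact (ih.tail ⟨hbw, fun h => hb h.1⟩).tail ⟨hwc, fun h => hc h.2⟩

theorem ReflTransGen.deleteInducedArcs_shortcut (hu : u ∉ X)
    (h : ReflTransGen (deleteInducedArcs A X) u v) :
    (v ∉ X ∧ ReflTransGen (deleteVertices (square A) X) u v) ∨
      (v ∈ X ∧ ∃ p ∉ X, ReflTransGen (deleteVertices (square A) X) u p ∧ A p v) := by
  induction h with
  | refl => exact .inl ⟨hu, .refl⟩
  | @tail b c _ hstep ih =>
    obtain ⟨hbc, hnot⟩ := hstep
    rcases ih with ⟨hb, hub⟩ | ⟨hb, p, hp, hup, hpb⟩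
    · by_cases hc : c ∈ X
      · exact .inr ⟨hc, b, hb, hub, hbc⟩
      · exact .inl ⟨hc, hub.tail ⟨.inl hbc, hb, hc⟩⟩
    · have hc : c ∉ X := fun hc => hnot ⟨hb, hc⟩
      exact .inl ⟨hc, hup.tail ⟨.inr ⟨b, hpb, hbc⟩, hp, hc⟩⟩

theorem ReflTransGen.deleteVertices_square_of_deleteInducedArcs (hu : u ∉ X) (hv : v ∉ X)
    (h : ReflTransGen (deleteInducedArcs A X) u v) :
    ReflTransGen (deleteVertices (square A) X) u v := by
  rcases h.deleteInducedArcs_shortcut hu with ⟨_, huv⟩ | ⟨hv', _⟩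
  · exact huv
  · exact absurd hv' hv

theorem reflTransGen_deleteInducedArcs_iff (hu : u ∉ X) (hv : v ∉ X) :
    ReflTransGen (deleteInducedArcs A X) u v ↔
      ReflTransGen (deleteVertices (square A) X) u v :=
  ⟨.deleteVertices_square_of_deleteInducedArcs hu hv,
    .deleteInducedArcs_of_deleteVertices_square⟩

end Relation

theorem stmt_2_general {V : Type*} (A : V → V → Prop) (s t : V) :
    sInf {n : ℕ | ∃ X : Set V, s ∉ X ∧ t ∉ X ∧
        (¬ Relation.ReflTransGen (fun u v => A u v ∧ ¬ (u ∈ X ∧ v ∈ X)) s t) ∧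
        X.ncard = n}
      =
    sInf {n : ℕ | ∃ Y : Set V, s ∉ Y ∧ t ∉ Y ∧
        (¬ Relation.ReflTransGen
          (fun u v => (A u v ∨ ∃ w, A u w ∧ A w v) ∧ u ∉ Y ∧ v ∉ Y) s t) ∧
        Y.ncard = n} := by
  congr 1
  ext n
  refine exists_congr fun X => and_congr_right fun hs => and_congr_right fun ht => ?_
  exact and_congr_left' (not_congr (Relation.reflTransGen_deleteInducedArcs_iff (A := A) hs ht))

/-- The minimum size of a downgrading set whose induced arcs form an `st`-cut of `G`
equals the minimum size of an `st`-vertex cut of the square digraph `G²`. -/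
theorem stmt_2 {V : Type*} [Fintype V] (A : V → V → Prop) (s t : V)
    (hst : s ≠ t) (hA : ¬ A s t) (hA2 : ¬ ∃ w, A s w ∧ A w t) :
    sInf {n : ℕ | ∃ X : Set V, s ∉ X ∧ t ∉ X ∧
        (¬ Relation.ReflTransGen (fun u v => A u v ∧ ¬ (u ∈ X ∧ v ∈ X)) s t) ∧
        X.ncard = n}
      =
    sInf {n : ℕ | ∃ Y : Set V, s ∉ Y ∧ t ∉ Y ∧
        (¬ Relation.ReflTransGen
          (fun u v => (A u v ∨ ∃ w, A u w ∧ A w v) ∧ u ∉ Y ∧ v ∉ Y) s t) ∧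
        Y.ncard = n} :=
  stmt_2_general A s t
end

section
/- Let G be a finite simple graph and let H be the graph with vertex set {s, t} ⊔ V(G) ⊔ E(G) (writing t_e for the vertex of H corresponding to edge e of G) and with edge set: {s,v} for every v ∈ V(G); {v, t_e} whenever v is an endpoint of e; and {t_e, t} for every e ∈ E(G). Let k be a natural number. Then the maximum, over all Y ⊆ V(G) with |Y| ≤ k, of the number of edges of G with both endpoints in Y equals |E(G)| minus the minimum, over all Y ⊆ V(G) with |Y| ≤ k, of the minimum cardinality of a set F ⊆ {{t_e, t} : e ∈ E(G)} such that deleting the vertices Y and the edges F from H leaves no s–t path. -/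
/-- Vertex type of the auxiliary graph `H` used in the DkS hardness reductions:
`Sum.inl 0` is the source `s`, `Sum.inl 1` is the sink `t`, `Sum.inr (Sum.inl v)` is the
original vertex `v` of `G`, and `Sum.inr (Sum.inr e)` is the subdivision vertex `t_e`
of the edge `e` of `G`. -/
abbrev AuxV {V : Type*} (G : SimpleGraph V) : Type _ := Fin 2 ⊕ (V ⊕ G.edgeSet)

/-- Adjacency of the auxiliary graph `H`: `s` is joined to every original vertex, each
subdivision vertex `t_e` is joined to the endpoints of `e`, and `t` is joined to every
subdivision vertex. -/
def auxAdj {V : Type*} (G : SimpleGraph V) : AuxV G → AuxV G → Prop := fun x y =>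
  (∃ v : V, (x = Sum.inl 0 ∧ y = Sum.inr (Sum.inl v)) ∨
            (x = Sum.inr (Sum.inl v) ∧ y = Sum.inl 0)) ∨
  (∃ (v : V) (e : G.edgeSet), v ∈ (e : Sym2 V) ∧
      ((x = Sum.inr (Sum.inl v) ∧ y = Sum.inr (Sum.inr e)) ∨
       (x = Sum.inr (Sum.inr e) ∧ y = Sum.inr (Sum.inl v)))) ∨
  (∃ e : G.edgeSet, (x = Sum.inr (Sum.inr e) ∧ y = Sum.inl 1) ∨
                    (x = Sum.inl 1 ∧ y = Sum.inr (Sum.inr e)))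

/-- Deleting the vertices in `Y` and the edges in `F` from the auxiliary graph `H`
leaves no `s`–`t` path. -/
def noSTPath {V : Type*} (G : SimpleGraph V) (Y : Set (AuxV G))
    (F : Set (Sym2 (AuxV G))) : Prop :=
  ¬ Relation.ReflTransGen
      (fun x y => auxAdj G x y ∧ x ∉ Y ∧ y ∉ Y ∧ s(x, y) ∉ F)
      (Sum.inl 0) (Sum.inl 1)

/-!
For a fixed interdicted set `Y`, once every `t_e` with `e ⊄ Y` has lost its edge to `t`, the
vertices reachable from `s` are among `s`, the vertices of `G` outside `Y`, and the `t_e` with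
`e ⊄ Y`; none of them is `t`. Conversely, if some `e ⊄ Y` keeps its edge to `t`, then
`s – v – t_e – t` is a path for an endpoint `v ∉ Y` of `e`. So the cheapest admissible cut for `Y`
consists of exactly these `|E(G)| - |E_Y|` edges, and minimising it over `Y` maximises `|E_Y|`.
-/

theorem Nat.sSup_eq_sub_sInf {A B : Set ℕ} {N : ℕ} (hA : A.Nonempty)
    (hAN : ∀ a ∈ A, a ≤ N) (hAB : ∀ a ∈ A, N - a ∈ B) (hBA : ∀ b ∈ B, ∃ a ∈ A, N - a ≤ b) :
    sSup A = N - sInf B := by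
  have hbdd : BddAbove A := ⟨N, hAN⟩
  have hmax : sSup A ∈ A := Nat.sSup_mem hA hbdd
  have hinf : sInf B = N - sSup A := by
    refine le_antisymm (Nat.sInf_le (hAB _ hmax)) (le_csInf ⟨_, hAB _ hmax⟩ fun b hb => ?_)
    obtain ⟨a, ha, hab⟩ := hBA b hb
    exact (Nat.sub_le_sub_left (le_csSup hbdd ha) N).trans hab
  have := hAN _ hmax
  omega

namespace AuxV

variable {V : Type*} {G : SimpleGraph V}

def origVertex (G : SimpleGraph V) (v : V) : AuxV G := Sum.inr (Sum.inl v)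

def sinkEdge (e : G.edgeSet) : Sym2 (AuxV G) := s(Sum.inr (Sum.inr e), Sum.inl 1)

def sinkEdges (G : SimpleGraph V) : Set (Sym2 (AuxV G)) := {p | ∃ e : G.edgeSet, p = sinkEdge e}

def residualAdj (G : SimpleGraph V) (Y : Set (AuxV G)) (F : Set (Sym2 (AuxV G))) (x y : AuxV G) :
    Prop :=
  auxAdj G x y ∧ x ∉ Y ∧ y ∉ Y ∧ s(x, y) ∉ F

def canonicalCut (G : SimpleGraph V) (Y : Set V) : Set (Sym2 (AuxV G)) :=
  sinkEdge '' {e : G.edgeSet | ¬ ∀ v ∈ (e : Sym2 V), v ∈ Y}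

lemma sinkEdge_injective : Function.Injective (sinkEdge (G := G)) := by
  intro e e' h
  simpa [sinkEdge] using h

lemma sink_mem_of_mem_sinkEdges {p : Sym2 (AuxV G)} (hp : p ∈ sinkEdges G) : Sum.inl 1 ∈ p := by
  obtain ⟨e, rfl⟩ := hp
  exact Sym2.mem_mk_right _ _

lemma canonicalCut_subset_sinkEdges (Y : Set V) : canonicalCut G Y ⊆ sinkEdges G := by
  rintro _ ⟨e, -, rfl⟩
  exact ⟨e, rfl⟩

lemma ncard_canonicalCut_add [Finite V] (Y : Set V) :
    (canonicalCut G Y).ncard + {e ∈ G.edgeSet | ∀ v ∈ e, v ∈ Y}.ncard = G.edgeSet.ncard := by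
  rw [canonicalCut, Set.ncard_image_of_injective _ sinkEdge_injective, add_comm,
    ← Set.ncard_inter_add_ncard_sdiff_eq_ncard G.edgeSet {x : Sym2 V | ∀ v ∈ x, v ∈ Y}]
  congr 1
  exact (Set.ncard_subtype (· ∈ G.edgeSet) {x | ¬ ∀ v ∈ x, v ∈ Y}).trans
    (congrArg _ (Set.inter_comm _ _))

def IsSourceSide (Y : Set V) : AuxV G → Prop
  | Sum.inl i => i = 0
  | Sum.inr (Sum.inl v) => v ∉ Y
  | Sum.inr (Sum.inr e) => ¬ ∀ v ∈ (e : Sym2 V), v ∈ Y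

variable {Y : Set V} {F : Set (Sym2 (AuxV G))}

lemma IsSourceSide.of_residualAdj (hcut : canonicalCut G Y ⊆ F) {x y : AuxV G}
    (hxy : residualAdj G (origVertex G '' Y) F x y) (hx : IsSourceSide Y x) :
    IsSourceSide Y y := by
  obtain ⟨hadj, -, hy, hxyF⟩ := hxy
  rcases hadj with ⟨v, ⟨rfl, rfl⟩ | ⟨rfl, rfl⟩⟩ | ⟨v, e, hve, ⟨rfl, rfl⟩ | ⟨rfl, rfl⟩⟩ |
    ⟨e, ⟨rfl, rfl⟩ | ⟨rfl, rfl⟩⟩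
  · exact fun hv => hy ⟨v, hv, rfl⟩
  · rfl
  · exact fun he => hx (he v hve)
  · exact fun hv => hy ⟨v, hv, rfl⟩
  · exact absurd (hcut ⟨e, hx, rfl⟩) hxyF
  · exact absurd hx one_ne_zero

lemma IsSourceSide.of_reflTransGen (hcut : canonicalCut G Y ⊆ F) {x : AuxV G}
    (hx : Relation.ReflTransGen (residualAdj G (origVertex G '' Y) F) (Sum.inl 0) x) :
    IsSourceSide Y x := by
  induction hx with
  | refl => rfl
  | tail _ hstep ih => exact ih.of_residualAdj hcut hstep

lemma sinkEdge_mem_of_noSTPath (hF : F ⊆ sinkEdges G) (hno : noSTPath G (origVertex G '' Y) F)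
    {e : G.edgeSet} {v : V} (hve : v ∈ (e : Sym2 V)) (hv : v ∉ Y) : sinkEdge e ∈ F := by
  by_contra he
  have hv' : origVertex G v ∉ origVertex G '' Y := by
    simpa [origVertex] using hv
  refine hno (.head ⟨Or.inl ⟨v, .inl ⟨rfl, rfl⟩⟩, ?_, hv', ?_⟩
    (.head ⟨Or.inr (.inl ⟨v, e, hve, .inl ⟨rfl, rfl⟩⟩), hv', ?_, ?_⟩
    (.single ⟨Or.inr (.inr ⟨e, .inl ⟨rfl, rfl⟩⟩), ?_, ?_, he⟩)))
  -- `s`, `t_e`, `t` are never interdicted, and `F` cuts only edges at `t`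
  all_goals first
    | simp [origVertex]
    | exact fun h => by simpa [origVertex] using sink_mem_of_mem_sinkEdges (hF h)

theorem noSTPath_iff_canonicalCut_subset (hF : F ⊆ sinkEdges G) :
    noSTPath G (origVertex G '' Y) F ↔ canonicalCut G Y ⊆ F := by
  refine ⟨fun hno => ?_, fun hcut hpath => one_ne_zero (IsSourceSide.of_reflTransGen hcut hpath)⟩
  rintro _ ⟨e, he, rfl⟩
  obtain ⟨v, hve, hv⟩ := not_forall₂.1 he
  exact sinkEdge_mem_of_noSTPath hF hno hve hv

end AuxV

open AuxV

/-- The relation `l* = |E(G)| - c*`: the Densest `k`-Subgraph value of `G` equals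
`|E(G)|` minus the optimal value of the interdiction instance on the auxiliary graph `H`
in which only sets `Y ⊆ V(G)` of size at most `k` may be interdicted and only edges
incident to `t` may be cut. -/
theorem stmt_14 {V : Type*} [Fintype V] (G : SimpleGraph V) (k : ℕ) :
    sSup {n : ℕ | ∃ Y : Set V, Y.ncard ≤ k ∧
        n = {e ∈ G.edgeSet | ∀ v ∈ e, v ∈ Y}.ncard}
      =
    G.edgeSet.ncard -
      sInf {n : ℕ | ∃ (Y : Set V) (F : Set (Sym2 (AuxV G))), Y.ncard ≤ k ∧
        F ⊆ {p | ∃ e : G.edgeSet, p = s(Sum.inr (Sum.inr e), Sum.inl 1)} ∧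
        noSTPath G ((fun v => (Sum.inr (Sum.inl v) : AuxV G)) '' Y) F ∧
        n = F.ncard} := by
  refine Nat.sSup_eq_sub_sInf ⟨_, ∅, by simp, rfl⟩ ?_ ?_ ?_
  · rintro _ ⟨Y, -, rfl⟩
    exact Set.ncard_le_ncard (Set.sep_subset _ _)
  · rintro _ ⟨Y, hY, rfl⟩
    have hcard := ncard_canonicalCut_add (G := G) Y
    refine ⟨Y, canonicalCut G Y, hY, canonicalCut_subset_sinkEdges Y,
      (noSTPath_iff_canonicalCut_subset (canonicalCut_subset_sinkEdges Y)).2 subset_rfl, ?_⟩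
    omega
  · rintro _ ⟨Y, F, hY, hF, hno, rfl⟩
    have hcard := ncard_canonicalCut_add (G := G) Y
    have hle := Set.ncard_le_ncard ((noSTPath_iff_canonicalCut_subset hF).1 hno)
    exact ⟨_, ⟨Y, hY, rfl⟩, by omega⟩
end
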